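/- Generalized McIver–Morgan rule: let f be a bounded expectation and let I be a bounded expectation with I ⪯ Φ_f(I) (a subinvariant w.r.t. f). Then there exist ε > 0 and a bounded expectation g such that ε·I ⪯ lfp Φ_g if and only if I ⪯ lfp Φ_f. -/

import Mathlib

open MeasureTheory Filter Topology
open scoped Classical ENNReal ENat NNReal

/-! Loop model: states `S`, guard `φ : Set S`, loop-body transition probabilities
`μ : S → S → ℝ≥0`. Expectations are functions `S → ℝ≥0∞` with the pointwise order. -/

variable {S : Type*}

/-- One-step weakest preexpectation of the loop body:
`wpF μ X s = ∑_{s'} μ s s' * X s'`. -/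
noncomputable def wpF (μ : S → S → ℝ≥0) (X : S → ℝ≥0∞) (s : S) : ℝ≥0∞ :=
  ∑' s', (μ s s' : ℝ≥0∞) * X s'

/-- The characteristic function `Φ_f` of the loop `while φ do C` with respect to the
postexpectation `f`. -/
noncomputable def Phi (φ : Set S) (μ : S → S → ℝ≥0) (f : S → ℝ≥0∞)
    (X : S → ℝ≥0∞) (s : S) : ℝ≥0∞ :=
  if s ∈ φ then wpF μ X s else f s

theorem Phi_mono (φ : Set S) (μ : S → S → ℝ≥0) (f : S → ℝ≥0∞) :
    Monotone (Phi φ μ f) := by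
  intro X Y h s
  unfold Phi wpF
  split_ifs with hs
  · exact ENNReal.tsum_le_tsum fun s' => mul_le_mul_right (h s') _
  · exact le_rfl

/-- Least fixed point of the characteristic function `Φ_f`,
i.e. the weakest preexpectation `wp(while φ do C)(f)`. -/
noncomputable def lfpPhi (φ : Set S) (μ : S → S → ℝ≥0) (f : S → ℝ≥0∞) : S → ℝ≥0∞ :=
  OrderHom.lfp ⟨Phi φ μ f, Phi_mono φ μ f⟩

/-- A finite expectation: `X s < ∞` for all states. -/
def FinExp (X : S → ℝ≥0∞) : Prop := ∀ s, X s < ⊤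

/-- A bounded expectation: `X s ≤ c` for some constant `c : ℝ≥0`. -/
def BddExp (X : S → ℝ≥0∞) : Prop := ∃ c : ℝ≥0, ∀ s, X s ≤ (c : ℝ≥0∞)

/-- `I` harmonizes with `f` if `I` agrees with `f` on all terminal states (states
outside the guard). -/
def Harmonizes (φ : Set S) (I f : S → ℝ≥0∞) : Prop := ∀ s ∉ φ, I s = f s

/-- `ΔI`: the expected change of `I` within one loop iteration. -/
noncomputable def dExp (φ : Set S) (μ : S → S → ℝ≥0) (I : S → ℝ≥0∞) (s : S) : ℝ≥0∞ :=
  if s ∈ φ then ∑' s', (μ s s' : ℝ≥0∞) * ((I s' - I s) ⊔ (I s - I s')) else 0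

/-- `I` is conditionally difference bounded if `ΔI` is bounded by a constant. -/
def CondDiffBdd (φ : Set S) (μ : S → S → ℝ≥0) (I : S → ℝ≥0∞) : Prop :=
  ∃ c : ℝ≥0, ∀ s, dExp φ μ I s ≤ (c : ℝ≥0∞)

/-! The loop space `Ω := ℕ → S` with its product σ-algebra (`S` discrete). -/

/-- The cylinder set of a finite sequence of states. -/
def Cyl (π : List S) : Set (ℕ → S) := {ϑ | ∀ i : Fin π.length, ϑ i = π.get i}

/-- The σ-algebra `F_n`, generated by the cylinder sets of sequences of length `n+1`. -/
def Fn (n : ℕ) : MeasurableSpace (ℕ → S) :=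
  MeasurableSpace.generateFrom {A | ∃ π : List S, π.length = n + 1 ∧ A = Cyl π}

/-- The shifted filtration `G_n := F_{n+1}`. -/
def Gn (n : ℕ) : MeasurableSpace (ℕ → S) := Fn (n + 1)

/-- One-step transition probability of the loop: from a state `a` inside the guard move
according to `μ`; a state outside the guard is absorbing. -/
noncomputable def stepP (φ : Set S) (μ : S → S → ℝ≥0) (a b : S) : ℝ≥0 :=
  if a ∈ φ then μ a b else if b = a then 1 else 0

/-- Product of the one-step transition probabilities along a finite sequence. -/
noncomputable def chainP (φ : Set S) (μ : S → S → ℝ≥0) : List S → ℝ≥0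
  | [] => 1
  | [_] => 1
  | a :: b :: rest => stepP φ μ a b * chainP φ μ (b :: rest)

/-- The prefix probability `p_s(π)` of the finite sequence `π` of states, starting the
loop in the state `s`. -/
noncomputable def prefP (φ : Set S) (μ : S → S → ℝ≥0) (s : S) (π : List S) : ℝ≥0 :=
  (if π.head? = some s then 1 else 0) * chainP φ μ π

/-- The looping time `τ`: the first time the run leaves the guard. -/
noncomputable def loopT (φ : Set S) (ϑ : ℕ → S) : ℕ∞ :=
  sInf {n : ℕ∞ | ∃ m : ℕ, n = (m : ℕ∞) ∧ ϑ m ∉ φ}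

/-- The stochastic process `X_n^{f,I}` induced by the invariant `I` (w.r.t. the
postexpectation `f`). -/
noncomputable def Xn (φ : Set S) (f I : S → ℝ≥0∞) (n : ℕ) (ϑ : ℕ → S) : ℝ≥0∞ :=
  if loopT φ ϑ ≤ (n : ℕ∞) then f (ϑ (loopT φ ϑ).toNat) else I (ϑ (n + 1))

/-- The stopped process `X_τ^f`. -/
noncomputable def Xstop (φ : Set S) (f : S → ℝ≥0∞) (ϑ : ℕ → S) : ℝ≥0∞ :=
  if loopT φ ϑ < ⊤ then f (ϑ (loopT φ ϑ).toNat) else 0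

/-! Write `Ψ := Φ_0` for the homogeneous part of `Φ_f`; iterating splits
`Φ_fⁿ (X + Y) = Φ_fⁿ X + Ψⁿ Y`. Hence a subinvariant satisfies
`I ⪯ Φ_fⁿ I ⪯ lfp Φ_f + Ψⁿ I` for every `n`. If `ε • I ⪯ W := lfp Φ_g`, then `W` is finite
(it is bounded by `sup g`, the loop body being stochastic) and `ε • Ψⁿ I ⪯ Ψⁿ W = W - Φ_gⁿ 0`,
which tends to `0` by Kleene's theorem; so letting `n → ∞` gives `I ⪯ lfp Φ_f`.
The converse direction takes `ε = 1` and `g = f`. -/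

theorem ENNReal.tsum_coe_eq_one {α : Type*} {f : α → ℝ≥0} (hf : ∑' a, f a = 1) :
    ∑' a, (f a : ℝ≥0∞) = 1 := by
  have hsum : Summable f := by
    by_contra h
    simp [tsum_eq_zero_of_not_summable h] at hf
  rw [← ENNReal.coe_tsum hsum, hf, ENNReal.coe_one]

theorem ENNReal.tsum_iSup_of_monotone {α ι : Type*} [Preorder ι] [IsDirectedOrder ι]
    {F : α → ι → ℝ≥0∞} (hF : ∀ a, Monotone (F a)) :
    ∑' a, ⨆ i, F a i = ⨆ i, ∑' a, F a i := by
  simp_rw [ENNReal.tsum_eq_iSup_sum, ENNReal.finsetSum_iSup_of_monotone hF]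
  exact iSup_comm

section

variable (φ : Set S) (μ : S → S → ℝ≥0)

theorem wpF_add (X Y : S → ℝ≥0∞) : wpF μ (X + Y) = wpF μ X + wpF μ Y := by
  ext s
  simp only [wpF, Pi.add_apply, mul_add]
  exact ENNReal.tsum_add

theorem wpF_smul (c : ℝ≥0∞) (X : S → ℝ≥0∞) : wpF μ (c • X) = c • wpF μ X := by
  ext s
  simp only [wpF, Pi.smul_apply, smul_eq_mul, ← ENNReal.tsum_mul_left, mul_left_comm]

theorem wpF_iSup {ι : Type*} [Preorder ι] [IsDirectedOrder ι] {X : ι → S → ℝ≥0∞}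
    (hX : Monotone X) : wpF μ (⨆ i, X i) = ⨆ i, wpF μ (X i) := by
  ext s
  simp only [wpF, iSup_apply, ENNReal.mul_iSup]
  exact ENNReal.tsum_iSup_of_monotone fun s' i j hij => mul_le_mul_right (hX hij s') _

theorem wpF_const_le (hμ : ∀ s, ∑' s', (μ s s' : ℝ≥0∞) ≤ 1) (c : ℝ≥0∞) :
    wpF μ (fun _ => c) ≤ fun _ => c := fun s => by
  simpa only [wpF, ENNReal.tsum_mul_right] using mul_le_of_le_one_left' (hμ s)

theorem Phi_add (f X Y : S → ℝ≥0∞) : Phi φ μ f (X + Y) = Phi φ μ f X + Phi φ μ 0 Y := by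
  ext s
  by_cases hs : s ∈ φ <;> simp [Phi, hs, wpF_add]

theorem Phi_zero_smul (c : ℝ≥0∞) (X : S → ℝ≥0∞) : Phi φ μ 0 (c • X) = c • Phi φ μ 0 X := by
  ext s
  by_cases hs : s ∈ φ <;> simp [Phi, hs, wpF_smul]

theorem Phi_iSup {ι : Type*} [Preorder ι] [IsDirectedOrder ι] [Nonempty ι] (f : S → ℝ≥0∞)
    {X : ι → S → ℝ≥0∞} (hX : Monotone X) : Phi φ μ f (⨆ i, X i) = ⨆ i, Phi φ μ f (X i) := by
  ext s
  by_cases hs : s ∈ φ <;> simp [Phi, hs, wpF_iSup μ hX]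

open OmegaCompletePartialOrder in
theorem Phi_ωScottContinuous (f : S → ℝ≥0∞) : ωScottContinuous (Phi φ μ f) := by
  have hωSup (c : Chain (S → ℝ≥0∞)) : ωSup c = ⨆ n, c n := by
    ext s
    simp only [ωSup, Chain.coe_map, Pi.evalOrderHom_coe, iSup_apply]
    -- `ℝ≥0∞` is an ω-CPO through its chain-complete structure, whose `cSup` is `sSup`
    rfl
  refine ωScottContinuous.of_monotone_map_ωSup ⟨Phi_mono φ μ f, fun c => ?_⟩
  rw [hωSup, hωSup]
  exact Phi_iSup φ μ f c.monotone

theorem lfpPhi_eq_iSup_iterate (f : S → ℝ≥0∞) : lfpPhi φ μ f = ⨆ n, (Phi φ μ f)^[n] 0 :=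
  fixedPoints.lfp_eq_sSup_iterate _ (Phi_ωScottContinuous φ μ f)

theorem Phi_lfpPhi (f : S → ℝ≥0∞) : Phi φ μ f (lfpPhi φ μ f) = lfpPhi φ μ f :=
  OrderHom.map_lfp ⟨Phi φ μ f, Phi_mono φ μ f⟩

theorem iterate_Phi_lfpPhi (f : S → ℝ≥0∞) (n : ℕ) :
    (Phi φ μ f)^[n] (lfpPhi φ μ f) = lfpPhi φ μ f :=
  Function.iterate_fixed (Phi_lfpPhi φ μ f) n

theorem iterate_Phi_le_lfpPhi (f : S → ℝ≥0∞) (n : ℕ) : (Phi φ μ f)^[n] 0 ≤ lfpPhi φ μ f :=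
  lfpPhi_eq_iSup_iterate φ μ f ▸ le_iSup (fun n => (Phi φ μ f)^[n] 0) n

theorem lfpPhi_le_const (hμ : ∀ s, ∑' s', (μ s s' : ℝ≥0∞) ≤ 1) {f : S → ℝ≥0∞} {c : ℝ≥0∞}
    (hf : ∀ s, f s ≤ c) : lfpPhi φ μ f ≤ fun _ => c :=
  OrderHom.lfp_le _ fun s => by
    show Phi φ μ f _ s ≤ c
    by_cases hs : s ∈ φ
    · simpa only [Phi, hs, if_true] using wpF_const_le μ hμ c s
    · simpa only [Phi, hs, if_false] using hf s

theorem iterate_Phi_add (f X Y : S → ℝ≥0∞) (n : ℕ) :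
    (Phi φ μ f)^[n] (X + Y) = (Phi φ μ f)^[n] X + (Phi φ μ 0)^[n] Y := by
  induction n with
  | zero => rfl
  | succ n ih => simp only [Function.iterate_succ_apply', ih, Phi_add]

theorem iterate_Phi_zero_smul (c : ℝ≥0∞) (X : S → ℝ≥0∞) (n : ℕ) :
    (Phi φ μ 0)^[n] (c • X) = c • (Phi φ μ 0)^[n] X := by
  induction n with
  | zero => rfl
  | succ n ih => simp only [Function.iterate_succ_apply', ih, Phi_zero_smul]

theorem iterate_Phi_zero_lfpPhi {f : S → ℝ≥0∞} (hf : ∀ s, lfpPhi φ μ f s ≠ ⊤) (n : ℕ) :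
    (Phi φ μ 0)^[n] (lfpPhi φ μ f) = lfpPhi φ μ f - (Phi φ μ f)^[n] 0 := by
  have h := iterate_Phi_add φ μ f 0 (lfpPhi φ μ f) n
  rw [zero_add, iterate_Phi_lfpPhi] at h
  ext s
  exact (ENNReal.sub_eq_of_eq_add_rev' (hf s) (congrFun h s)).symm

theorem tendsto_iterate_Phi_zero_lfpPhi {f : S → ℝ≥0∞} (hf : ∀ s, lfpPhi φ μ f s ≠ ⊤) (s : S) :
    Tendsto (fun n => (Phi φ μ 0)^[n] (lfpPhi φ μ f) s) atTop (𝓝 0) := by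
  have hmono : Monotone fun n => (Phi φ μ f)^[n] 0 :=
    monotone_nat_of_le_succ fun n => by
      rw [Function.iterate_succ_apply]
      exact (Phi_mono φ μ f).iterate n bot_le
  have hlim : Tendsto (fun n => (Phi φ μ f)^[n] 0 s) atTop (𝓝 (lfpPhi φ μ f s)) := by
    rw [lfpPhi_eq_iSup_iterate, iSup_apply]
    exact tendsto_atTop_iSup fun m n hmn => hmono hmn s
  simp_rw [iterate_Phi_zero_lfpPhi φ μ hf, Pi.sub_apply]
  simpa using ENNReal.Tendsto.sub (tendsto_const_nhds (x := lfpPhi φ μ f s)) hlim (Or.inl (hf s))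

theorem le_lfpPhi_add_iterate_Phi_zero {f I : S → ℝ≥0∞} (hsub : I ≤ Phi φ μ f I) (n : ℕ) :
    I ≤ lfpPhi φ μ f + (Phi φ μ 0)^[n] I := by
  have hiter : I ≤ (Phi φ μ f)^[n] I := by
    induction n with
    | zero => exact le_rfl
    | succ n ih =>
      rw [Function.iterate_succ_apply']
      exact hsub.trans (Phi_mono φ μ f ih)
  calc I ≤ (Phi φ μ f)^[n] (0 + I) := by rwa [zero_add]
    _ = (Phi φ μ f)^[n] 0 + (Phi φ μ 0)^[n] I := iterate_Phi_add φ μ f 0 I n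
    _ ≤ lfpPhi φ μ f + (Phi φ μ 0)^[n] I := add_le_add_left (iterate_Phi_le_lfpPhi φ μ f n) _

theorem le_lfpPhi_of_le_Phi_of_smul_le_lfpPhi {f g I : S → ℝ≥0∞} (hsub : I ≤ Phi φ μ f I)
    (hg : ∀ s, lfpPhi φ μ g s ≠ ⊤) {ε : ℝ≥0} (hε : ε ≠ 0)
    (hI : (ε : ℝ≥0∞) • I ≤ lfpPhi φ μ g) : I ≤ lfpPhi φ μ f := by
  have hε' : (ε : ℝ≥0∞) ≠ 0 := ENNReal.coe_ne_zero.mpr hε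
  have hbound (n : ℕ) : (Phi φ μ 0)^[n] I ≤ (ε : ℝ≥0∞)⁻¹ • (Phi φ μ 0)^[n] (lfpPhi φ μ g) := by
    calc (Phi φ μ 0)^[n] I = (ε : ℝ≥0∞)⁻¹ • (Phi φ μ 0)^[n] ((ε : ℝ≥0∞) • I) := by
          rw [iterate_Phi_zero_smul, smul_smul, ENNReal.inv_mul_cancel hε' ENNReal.coe_ne_top,
            one_smul]
      _ ≤ (ε : ℝ≥0∞)⁻¹ • (Phi φ μ 0)^[n] (lfpPhi φ μ g) := by
          gcongr
          exact (Phi_mono φ μ 0).iterate n hI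
  intro s
  have hlim : Tendsto (fun n => lfpPhi φ μ f s + (ε : ℝ≥0∞)⁻¹ * (Phi φ μ 0)^[n] (lfpPhi φ μ g) s)
      atTop (𝓝 (lfpPhi φ μ f s)) := by
    simpa using tendsto_const_nhds.add (ENNReal.Tendsto.const_mul
      (tendsto_iterate_Phi_zero_lfpPhi φ μ hg s) (Or.inr (ENNReal.inv_ne_top.mpr hε')))
  exact ge_of_tendsto' hlim fun n =>
    (le_lfpPhi_add_iterate_Phi_zero φ μ hsub n s).trans (add_le_add le_rfl (hbound n s))

end

theorem generalized_mciver_morgan_general {S : Type*}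
    (φ : Set S) (μ : S → S → ℝ≥0) (hμ : ∀ s, ∑' s', μ s s' = 1)
    (f I : S → ℝ≥0∞) (hf : BddExp f) (hsub : I ≤ Phi φ μ f I) :
    (∃ ε : ℝ≥0, 0 < ε ∧ ∃ g : S → ℝ≥0∞, BddExp g ∧
        (fun s => (ε : ℝ≥0∞) * I s) ≤ lfpPhi φ μ g)
      ↔ I ≤ lfpPhi φ μ f := by
  constructor
  · rintro ⟨ε, hε, g, ⟨c, hg⟩, hεI⟩
    have hfin (s : S) : lfpPhi φ μ g s ≠ ⊤ :=
      ne_top_of_le_ne_top ENNReal.coe_ne_top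
        (lfpPhi_le_const φ μ (fun s => (ENNReal.tsum_coe_eq_one (hμ s)).le) hg s)
    exact le_lfpPhi_of_le_Phi_of_smul_le_lfpPhi φ μ hsub hfin hε.ne' hεI
  · intro h
    exact ⟨1, one_pos, f, hf, by simpa using h⟩

/-- **Generalized McIver–Morgan rule.** For bounded `f` and a bounded subinvariant `I`
w.r.t. `f`: there exist `ε > 0` and a bounded expectation `g` with
`ε·I ⪯ lfp Φ_g` if and only if `I ⪯ lfp Φ_f`. -/
theorem generalized_mciver_morgan {S : Type*} [Countable S]
    (φ : Set S) (μ : S → S → ℝ≥0) (hμ : ∀ s, ∑' s', μ s s' = 1)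
    (f I : S → ℝ≥0∞) (hf : BddExp f) (hI : BddExp I) (hsub : I ≤ Phi φ μ f I) :
    (∃ ε : ℝ≥0, 0 < ε ∧ ∃ g : S → ℝ≥0∞, BddExp g ∧
        (fun s => (ε : ℝ≥0∞) * I s) ≤ lfpPhi φ μ g)
      ↔ I ≤ lfpPhi φ μ f :=
  generalized_mciver_morgan_general φ μ hμ f I hf hsub
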